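/- arXiv:1610.09757 — 5 statements merged into one kernel-verified Lean document; each statement's English description precedes it below -/
import Mathlib

section
/- Let n ≥ 0 be an integer, ε∞, ε₀ ∈ {1, −1}, K₀, K₁, K₂, K₃ ∈ ℂ with −ε∞(K₂ + K₃²/4) − 2ε₀√(−K₀) = 2(n+1). Set α = 1/2 + ε₀√(−K₀) and ω(x) = ε∞(x − K₃/2) + α/x. If P is a polynomial solving x P''(x) + (1 + 2ε₀√(−K₀) − ε∞K₃ x + 2ε∞ x²) P'(x) + (−2ε∞ n x + K₁ − ε∞ α K₃) P(x) = 0, then y(x) := P(x) · x^α · exp(ε∞(x² − K₃x)/2) satisfies y'' = (x² − K₃x − K₂ − K₁/x − (1/4 + K₀)/x²) y on any simply connected domain in ℂ \ {0}. -/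
open Complex Filter Topology Polynomial

/-!
Write `y = P · E` with `E = x^α · exp(ε∞(x² − K₃x)/2)`. The factor `E` satisfies `E' = ω E`
with `ω = α/x + ε∞(x − K₃/2)`, so `y'' = (P'' + 2ωP' + (ω' + ω²)P) E`. Dividing the polynomial
equation by `x` and using `ε∞² = ε₀² = 1`, `s₀² = −K₀` and the quantization condition turns
`P'' + 2ωP' + (ω' + ω²)P` into `r P`.
-/

theorem deriv_deriv_mul_of_hasDerivAt_eq_mul {𝕜 : Type*} [NontriviallyNormedField 𝕜]
    {f f' E ω : 𝕜 → 𝕜} {x f'' ω' : 𝕜}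
    (hf : ∀ᶠ t in 𝓝 x, HasDerivAt f (f' t) t) (hE : ∀ᶠ t in 𝓝 x, HasDerivAt E (ω t * E t) t)
    (hf' : HasDerivAt f' f'' x) (hω : HasDerivAt ω ω' x) :
    deriv (deriv fun t => f t * E t) x = (f'' + 2 * ω x * f' x + (ω' + ω x ^ 2) * f x) * E x := by
  have hderiv : deriv (fun t => f t * E t) =ᶠ[𝓝 x] fun t => (f' t + ω t * f t) * E t := by
    filter_upwards [hf, hE] with t hft hEt
    exact ((hft.mul hEt).congr_deriv (by ring)).deriv
  rw [hderiv.deriv_eq]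
  exact (((hf'.fun_add (hω.fun_mul hf.self_of_nhds)).fun_mul hE.self_of_nhds).congr_deriv
    (by ring)).deriv

theorem hasDerivAt_cexp_mul_mul_cexp (α ε K : ℂ) {lg : ℂ → ℂ} {t : ℂ}
    (hlg : HasDerivAt lg t⁻¹ t) :
    HasDerivAt (fun s => exp (α * lg s) * exp (ε * (s ^ 2 - K * s) / 2))
      ((α * t⁻¹ + ε * (t - K / 2)) * (exp (α * lg t) * exp (ε * (t ^ 2 - K * t) / 2))) t := by
  have hquad : HasDerivAt (fun s : ℂ => ε * (s ^ 2 - K * s) / 2) (ε * (2 * t - K) / 2) t := by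
    have := (((hasDerivAt_pow 2 t).sub ((hasDerivAt_id t).const_mul K)).const_mul ε).div_const 2
    simpa using this
  exact (((hlg.const_mul α).cexp).mul hquad.cexp).congr_deriv (by ring)

theorem hasDerivAt_div_add_mul_sub (α ε K : ℂ) {x : ℂ} (hx : x ≠ 0) :
    HasDerivAt (fun t => α * t⁻¹ + ε * (t - K / 2)) (ε - α / x ^ 2) x :=
  (((hasDerivAt_inv hx).const_mul α).add (((hasDerivAt_id x).sub_const (K / 2)).const_mul ε))
    |>.congr_deriv (by field_simp; ring)

theorem gauge_transform_eq_potential_mul {K0 K1 K2 K3 einf e0 s0 x p p' p'' : ℂ} {n : ℕ}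
    (heinf : einf ^ 2 = 1) (he0 : e0 ^ 2 = 1) (hs0 : s0 ^ 2 = -K0)
    (hquant : -einf * (K2 + K3 ^ 2 / 4) - 2 * e0 * s0 = 2 * ((n : ℂ) + 1)) (hx : x ≠ 0)
    (hp : x * p'' + (1 + 2 * e0 * s0 - einf * K3 * x + 2 * einf * x ^ 2) * p'
      + (-2 * einf * (n : ℂ) * x + K1 - einf * (1/2 + e0 * s0) * K3) * p = 0) :
    p'' + 2 * ((1/2 + e0 * s0) * x⁻¹ + einf * (x - K3 / 2)) * p'
      + ((einf - (1/2 + e0 * s0) / x ^ 2) + ((1/2 + e0 * s0) * x⁻¹ + einf * (x - K3 / 2)) ^ 2) * p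
      = (x ^ 2 - K3 * x - K2 - K1 / x - (1/4 + K0) / x ^ 2) * p := by
  have hinv : x * x⁻¹ = 1 := mul_inv_cancel₀ hx
  linear_combination x⁻¹ * hp + (-einf * p) * hquant + (x⁻¹ ^ 2 * p) * hs0
    + (((x - K3 / 2) ^ 2 - (K2 + K3 ^ 2 / 4)) * p) * heinf + (s0 ^ 2 * x⁻¹ ^ 2 * p) * he0
    + (-p'' - (2 * einf * x - einf * K3) * p' + (2 * einf * n + 2 * einf * (1/2 + e0 * s0)) * p)
      * hinv

theorem stmt4_general (K0 K1 K2 K3 einf e0 s0 : ℂ) (n : ℕ)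
    (heinf : einf = 1 ∨ einf = -1) (he0 : e0 = 1 ∨ e0 = -1)
    (hs0 : s0 ^ 2 = -K0)
    (hquant : -einf * (K2 + K3 ^ 2 / 4) - 2 * e0 * s0 = 2 * ((n : ℂ) + 1))
    (U : Set ℂ) (hU : IsOpen U) (h0 : (0:ℂ) ∉ U)
    (lg : ℂ → ℂ) (hlg : ∀ x ∈ U, HasDerivAt lg (1/x) x)
    (P : Polynomial ℂ)
    (hP : ∀ x : ℂ, x * (Polynomial.derivative (Polynomial.derivative P)).eval x
      + (1 + 2 * e0 * s0 - einf * K3 * x + 2 * einf * x ^ 2)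
        * (Polynomial.derivative P).eval x
      + (-2 * einf * (n : ℂ) * x + K1 - einf * (1/2 + e0 * s0) * K3) * P.eval x = 0) :
    ∀ x ∈ U,
      deriv (deriv (fun t => P.eval t * Complex.exp ((1/2 + e0 * s0) * lg t)
        * Complex.exp (einf * (t ^ 2 - K3 * t) / 2))) x
      = (x ^ 2 - K3 * x - K2 - K1 / x - (1/4 + K0) / x ^ 2)
        * (P.eval x * Complex.exp ((1/2 + e0 * s0) * lg x)
          * Complex.exp (einf * (x ^ 2 - K3 * x) / 2)) := by
  intro x hx
  have hx0 : x ≠ 0 := ne_of_mem_of_not_mem hx h0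
  have hE : ∀ᶠ t in 𝓝 x, HasDerivAt
      (fun s => exp ((1/2 + e0 * s0) * lg s) * exp (einf * (s ^ 2 - K3 * s) / 2))
      (((1/2 + e0 * s0) * t⁻¹ + einf * (t - K3 / 2))
        * (exp ((1/2 + e0 * s0) * lg t) * exp (einf * (t ^ 2 - K3 * t) / 2))) t := by
    filter_upwards [hU.mem_nhds hx] with t ht
    exact hasDerivAt_cexp_mul_mul_cexp _ _ _ (by simpa only [one_div] using hlg t ht)
  have hsq {c : ℂ} (hc : c = 1 ∨ c = -1) : c ^ 2 = 1 := by rcases hc with rfl | rfl <;> norm_num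
  simp only [mul_assoc]
  rw [deriv_deriv_mul_of_hasDerivAt_eq_mul (.of_forall fun t => P.hasDerivAt t) hE
    ((derivative P).hasDerivAt x) (hasDerivAt_div_add_mul_sub _ _ _ hx0), ← mul_assoc,
    gauge_transform_eq_potential_mul (hsq heinf) (hsq he0) hs0 hquant hx0 (hP x)]
  ring

/-- if P solves the polynomial (biconfluent-Heun–type) equation, then
y = P(x)·x^α·exp(ε∞(x²−K₃x)/2) solves the normal form y'' = r y, where x^α is
realized as exp(α·lg x) for a branch lg of the logarithm on a simply connected
domain U ⊆ ℂ \ {0}. -/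
theorem stmt4 (K0 K1 K2 K3 einf e0 s0 : ℂ) (n : ℕ)
    (heinf : einf = 1 ∨ einf = -1) (he0 : e0 = 1 ∨ e0 = -1)
    (hs0 : s0 ^ 2 = -K0)
    (hquant : -einf * (K2 + K3 ^ 2 / 4) - 2 * e0 * s0 = 2 * ((n : ℂ) + 1))
    (U : Set ℂ) (hU : IsOpen U) (h0 : (0:ℂ) ∉ U) (hsc : SimplyConnectedSpace U)
    (lg : ℂ → ℂ) (hlg : ∀ x ∈ U, HasDerivAt lg (1/x) x)
    (P : Polynomial ℂ)
    (hP : ∀ x : ℂ, x * (Polynomial.derivative (Polynomial.derivative P)).eval x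
      + (1 + 2 * e0 * s0 - einf * K3 * x + 2 * einf * x ^ 2)
        * (Polynomial.derivative P).eval x
      + (-2 * einf * (n : ℂ) * x + K1 - einf * (1/2 + e0 * s0) * K3) * P.eval x = 0) :
    ∀ x ∈ U,
      deriv (deriv (fun t => P.eval t * Complex.exp ((1/2 + e0 * s0) * lg t)
        * Complex.exp (einf * (t ^ 2 - K3 * t) / 2))) x
      = (x ^ 2 - K3 * x - K2 - K1 / x - (1/4 + K0) / x ^ 2)
        * (P.eval x * Complex.exp ((1/2 + e0 * s0) * lg x)
          * Complex.exp (einf * (x ^ 2 - K3 * x) / 2)) :=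
  stmt4_general K0 K1 K2 K3 einf e0 s0 n heinf he0 hs0 hquant U hU h0 lg hlg P hP
end

section
/- Let a = ε∞/2, b = −ε∞K₃/2, d = ε₀√(−K₀) with ε∞, ε₀ ∈ {1,−1} and K₄ = −1. Then 4a² + K₄ = 0 and d² + K₀ = 0; moreover if F satisfies F''(ζ) + (4aζ + 2b)F'(ζ) + ((K₃ + 4ab)ζ + K₂ + 4a(1+d) + b²)F(ζ) = 0, then K₃ + 4ab = 0 and under the substitution w = −ε∞(ζ − K₃/2)², u(w) = F(ζ), the function u satisfies the confluent hypergeometric (Kummer) equation w u''(w) + (1/2 − w) u'(w) − (ε∞K₃²/16 + ε₀√(−K₀)/2 + ε∞K₂/4 + 1/2) u(w) = 0. -/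
/-!
Under `w = c (ζ - m)²` the chain rule gives `F' = 2c(ζ - m) u'` and
`F'' = 4c w u'' + 2c u'`, so the Hermite-type equation `F'' - 2c(ζ - m) F' - 4cμ F = 0`
is `4c` times Kummer's equation `w u'' + (1/2 - w) u' - μ u = 0`. With `c = -ε∞`, `m = K₃/2`
and `ε∞² = 1`, the kernel equation is of this form, since its coefficient of `ζ F` is
`K₃(1 - ε∞²) = 0`.
-/

section QuadraticSubstitution

variable {u : ℂ → ℂ} (c m : ℂ)

theorem hasDerivAt_mul_sub_sq (z : ℂ) :
    HasDerivAt (fun t : ℂ => c * (t - m) ^ 2) (2 * c * (z - m)) z := by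
  simpa [mul_assoc, mul_left_comm] using
    (((hasDerivAt_id z).sub_const m).fun_pow 2).const_mul c

theorem deriv_comp_mul_sub_sq (hu : Differentiable ℂ u) (z : ℂ) :
    deriv (fun t => u (c * (t - m) ^ 2)) z =
      2 * c * (z - m) * deriv u (c * (z - m) ^ 2) := by
  rw [mul_comm]
  exact ((hu _).hasDerivAt.comp z (hasDerivAt_mul_sub_sq c m z)).deriv

theorem deriv_deriv_comp_mul_sub_sq (hu : Differentiable ℂ u)
    (hu' : Differentiable ℂ (deriv u)) (z : ℂ) :
    deriv (deriv fun t => u (c * (t - m) ^ 2)) z =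
      4 * c * (c * (z - m) ^ 2) * deriv (deriv u) (c * (z - m) ^ 2)
        + 2 * c * deriv u (c * (z - m) ^ 2) := by
  have hlin : HasDerivAt (fun t : ℂ => 2 * c * (t - m)) (2 * c) z := by
    simpa using ((hasDerivAt_id z).sub_const m).const_mul (2 * c)
  have hu'g := (hu' _).hasDerivAt.comp z (hasDerivAt_mul_sub_sq c m z)
  rw [Function.comp_def] at hu'g
  rw [funext (deriv_comp_mul_sub_sq c m hu), (hlin.fun_mul hu'g).deriv]
  ring

theorem kummer_of_comp_mul_sub_sq (hu : Differentiable ℂ u)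
    (hu' : Differentiable ℂ (deriv u)) (hc : c ≠ 0) (μ z : ℂ)
    (hF : deriv (deriv fun t => u (c * (t - m) ^ 2)) z
      - 2 * c * (z - m) * deriv (fun t => u (c * (t - m) ^ 2)) z
      - 4 * c * μ * u (c * (z - m) ^ 2) = 0) :
    c * (z - m) ^ 2 * deriv (deriv u) (c * (z - m) ^ 2)
      + (1 / 2 - c * (z - m) ^ 2) * deriv u (c * (z - m) ^ 2)
      - μ * u (c * (z - m) ^ 2) = 0 := by
  rw [deriv_deriv_comp_mul_sub_sq c m hu hu', deriv_comp_mul_sub_sq c m hu] at hF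
  have h4c : 4 * c ≠ 0 := mul_ne_zero (by norm_num) hc
  refine (mul_eq_zero.mp ?_).resolve_left h4c
  linear_combination hF

end QuadraticSubstitution

theorem stmt11_general (K0 K2 K3 einf e0 s0 a b d K4 : ℂ)
    (heinf : einf = 1 ∨ einf = -1) (he0 : e0 = 1 ∨ e0 = -1)
    (hs0 : s0 ^ 2 = -K0)
    (ha : a = einf / 2) (hb : b = -einf * K3 / 2) (hd : d = e0 * s0)
    (hK4 : K4 = -1)
    (F u : ℂ → ℂ)
    (hud : Differentiable ℂ u) (hud2 : Differentiable ℂ (deriv u))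
    (hFode : ∀ ζ, deriv (deriv F) ζ + (4 * a * ζ + 2 * b) * deriv F ζ
      + ((K3 + 4 * a * b) * ζ + K2 + 4 * a * (1 + d) + b ^ 2) * F ζ = 0)
    (hsub : ∀ ζ, u (-einf * (ζ - K3/2) ^ 2) = F ζ) :
    4 * a ^ 2 + K4 = 0 ∧ d ^ 2 + K0 = 0 ∧ K3 + 4 * a * b = 0 ∧
    ∀ ζ : ℂ,
      (-einf * (ζ - K3/2) ^ 2) * deriv (deriv u) (-einf * (ζ - K3/2) ^ 2)
        + (1/2 - (-einf * (ζ - K3/2) ^ 2)) * deriv u (-einf * (ζ - K3/2) ^ 2)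
        - (einf * K3 ^ 2 / 16 + e0 * s0 / 2 + einf * K2 / 4 + 1/2)
          * u (-einf * (ζ - K3/2) ^ 2) = 0 := by
  subst ha hb hd hK4
  have he2 : einf ^ 2 = 1 := by rcases heinf with h | h <;> simp [h]
  have he02 : e0 ^ 2 = 1 := by rcases he0 with h | h <;> simp [h]
  have heinf0 : -einf ≠ 0 := by rcases heinf with h | h <;> simp [h]
  obtain rfl : F = fun t => u (-einf * (t - K3 / 2) ^ 2) := funext fun t => (hsub t).symm
  refine ⟨by linear_combination he2, by linear_combination s0 ^ 2 * he02 + hs0,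
    by linear_combination (-K3) * he2, fun ζ => ?_⟩
  refine kummer_of_comp_mul_sub_sq (-einf) (K3 / 2) hud hud2 heinf0 _ ζ ?_
  linear_combination hFode ζ + (K3 * ζ + K2) * u (-einf * (ζ - K3 / 2) ^ 2) * he2

/-- separation-of-variables computation: with a = ε∞/2,
b = −ε∞K₃/2, d = ε₀√(−K₀), K₄ = −1, we have 4a²+K₄ = 0, d²+K₀ = 0, K₃+4ab = 0,
and under w = −ε∞(ζ−K₃/2)², u(w) = F(ζ), the kernel ODE becomes Kummer's
confluent hypergeometric equation. -/
theorem stmt11 (K0 K2 K3 einf e0 s0 a b d K4 : ℂ)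
    (heinf : einf = 1 ∨ einf = -1) (he0 : e0 = 1 ∨ e0 = -1)
    (hs0 : s0 ^ 2 = -K0)
    (ha : a = einf / 2) (hb : b = -einf * K3 / 2) (hd : d = e0 * s0)
    (hK4 : K4 = -1)
    (F u : ℂ → ℂ)
    (hFd : Differentiable ℂ F) (hFd2 : Differentiable ℂ (deriv F))
    (hud : Differentiable ℂ u) (hud2 : Differentiable ℂ (deriv u))
    (hFode : ∀ ζ, deriv (deriv F) ζ + (4 * a * ζ + 2 * b) * deriv F ζ
      + ((K3 + 4 * a * b) * ζ + K2 + 4 * a * (1 + d) + b ^ 2) * F ζ = 0)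
    (hsub : ∀ ζ, u (-einf * (ζ - K3/2) ^ 2) = F ζ) :
    4 * a ^ 2 + K4 = 0 ∧ d ^ 2 + K0 = 0 ∧ K3 + 4 * a * b = 0 ∧
    ∀ ζ : ℂ,
      (-einf * (ζ - K3/2) ^ 2) * deriv (deriv u) (-einf * (ζ - K3/2) ^ 2)
        + (1/2 - (-einf * (ζ - K3/2) ^ 2)) * deriv u (-einf * (ζ - K3/2) ^ 2)
        - (einf * K3 ^ 2 / 16 + e0 * s0 / 2 + einf * K2 / 4 + 1/2)
          * u (-einf * (ζ - K3/2) ^ 2) = 0 :=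
  stmt11_general K0 K2 K3 einf e0 s0 a b d K4 heinf he0 hs0 ha hb hd hK4 F u hud hud2 hFode hsub
end

section
/- Let φ(z) = exp(a e^{2z} + b e^z + d z) with a, b, d ∈ ℂ, let F be twice differentiable, and set K(z,s) = φ(z)φ(s)F(e^z + e^s). Write L_z = e^{−z}(∂²/∂z² + ℓ(z)) with ℓ(z) = K₄e^{4z} + K₃e^{3z} + K₂e^{2z} + K₁e^z + K₀. If 4a² + K₄ = 0, d² + K₀ = 0, and F satisfies F''(ζ) + (4aζ + 2b)F'(ζ) + ((K₃ + 4ab)ζ + K₂ + 4a(1+d) + b²)F(ζ) = 0, then L_z K(z,s) − L_s K(z,s) = 0 identically. -/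
/-!
Write `x = e^z`, `y = e^s`, `ζ = x + y` and `p(z) = a e^{2z} + b e^z + d z`, so `φ = exp ∘ p`.
Conjugating `∂²_z` by `exp p` gives `K_zz = φ(z)φ(s) ((p'² + p'') F + (2p' + 1) x F' + x² F'')`.
The conditions `4a² + K₄ = 0` and `d² + K₀ = 0` kill the `x⁴` and `x⁰` terms of `p'² + p'' + ℓ`, so
after division by `x` the operator `L_z` applied to `K` is a polynomial of degree two in `x` whose
coefficients involve `F, F', F''` at `ζ`. In `L_z K − L_s K` the parts that do not depend on `x` cancel
and the rest factors as `φ(z)φ(s)(x − y)` times the ODE for `F` at `ζ`.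
-/

open Complex

lemma hasDerivAt_cexp_mul {p g : ℂ → ℂ} {p' g' z : ℂ} (hp : HasDerivAt p p' z)
    (hg : HasDerivAt g g' z) :
    HasDerivAt (fun w => exp (p w) * g w) (exp (p z) * (p' * g z + g')) z :=
  (hp.cexp.mul hg).congr_deriv (by ring)

lemma deriv_deriv_cexp_mul {p p' g g' : ℂ → ℂ} {p'' g'' z : ℂ}
    (hp : ∀ w, HasDerivAt p (p' w) w) (hp' : HasDerivAt p' p'' z)
    (hg : ∀ w, HasDerivAt g (g' w) w) (hg' : HasDerivAt g' g'' z) :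
    deriv (fun z' => deriv (fun w => exp (p w) * g w) z') z
      = exp (p z) * ((p' z ^ 2 + p'') * g z + 2 * p' z * g' z + g'') := by
  have hderiv : (fun z' => deriv (fun w => exp (p w) * g w) z')
      = fun w => exp (p w) * (p' w * g w + g' w) :=
    funext fun w => (hasDerivAt_cexp_mul (hp w) (hg w)).deriv
  rw [hderiv]
  exact (hasDerivAt_cexp_mul (g := fun w => p' w * g w + g' w) (hp z)
    ((hp'.mul (hg z)).add hg')).deriv.trans (by ring)

lemma hasDerivAt_exp_two_mul_add (a b z : ℂ) :
    HasDerivAt (fun w => a * exp (2 * w) + b * exp w) (2 * a * exp (2 * z) + b * exp z) z :=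
  ((((hasDerivAt_id' z).const_mul 2).cexp.const_mul a).add
    ((hasDerivAt_exp z).const_mul b)).congr_deriv (by ring)

lemma hasDerivAt_comp_exp_add {G : ℂ → ℂ} (hG : Differentiable ℂ G) (c z : ℂ) :
    HasDerivAt (fun w => G (exp w + c)) (deriv G (exp z + c) * exp z) z :=
  (hG _).hasDerivAt.comp z ((hasDerivAt_exp z).add_const c)

lemma exp_ofNat_mul (n : ℕ) [n.AtLeastTwo] (z : ℂ) : exp (ofNat(n) * z) = exp z ^ ofNat(n) :=
  exp_nat_mul z n

section HillKernel

variable {K0 K1 K2 K3 K4 a b d : ℂ} {φ F ℓ : ℂ → ℂ}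

lemma deriv_deriv_kernel
    (hφ : ∀ z, φ z = exp (a * exp (2 * z) + b * exp z + d * z))
    (hF : Differentiable ℂ F) (hF' : Differentiable ℂ (deriv F)) (C c z : ℂ) :
    deriv (fun z' => deriv (fun w => φ w * C * F (exp w + c)) z') z
      = φ z * C * (((2 * a * exp (2 * z) + b * exp z + d) ^ 2 + 4 * a * exp (2 * z) + b * exp z)
          * F (exp z + c) + (2 * (2 * a * exp (2 * z) + b * exp z + d) + 1) * exp z * deriv F (exp z + c)
          + exp z ^ 2 * deriv (deriv F) (exp z + c)) := by
  have hkernel : (fun w => φ w * C * F (exp w + c))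
      = fun w => exp (a * exp (2 * w) + b * exp w + d * w) * (C * F (exp w + c)) := by
    funext w; rw [hφ]; ring
  rw [hkernel, deriv_deriv_cexp_mul (p := fun w => a * exp (2 * w) + b * exp w + d * w)
    (p' := fun w => 2 * a * exp (2 * w) + b * exp w + d) (g := fun w => C * F (exp w + c))
    (g' := fun w => C * (deriv F (exp w + c) * exp w))
    (fun w => ((hasDerivAt_exp_two_mul_add a b w).add ((hasDerivAt_id w).const_mul d)).congr_deriv
      (by rw [mul_one]))
    ((hasDerivAt_exp_two_mul_add (2 * a) b z).add_const d)
    (fun w => (hasDerivAt_comp_exp_add hF c w).const_mul C)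
    (((hasDerivAt_comp_exp_add hF' c z).mul (hasDerivAt_exp z)).const_mul C), hφ]
  ring

lemma exp_neg_mul_hill_kernel
    (hφ : ∀ z, φ z = exp (a * exp (2 * z) + b * exp z + d * z))
    (hℓ : ∀ z, ℓ z = K4 * exp (4 * z) + K3 * exp (3 * z) + K2 * exp (2 * z) + K1 * exp z + K0)
    (hF : Differentiable ℂ F) (hF' : Differentiable ℂ (deriv F))
    (ha : 4 * a ^ 2 + K4 = 0) (hd : d ^ 2 + K0 = 0) (C c z : ℂ) :
    exp (-z) * (deriv (fun z' => deriv (fun w => φ w * C * F (exp w + c)) z') z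
        + ℓ z * (φ z * C * F (exp z + c)))
      = φ z * C * (((K3 + 4 * a * b) * exp z ^ 2 + (K2 + 4 * a * (1 + d) + b ^ 2) * exp z
          + (K1 + b + 2 * b * d)) * F (exp z + c)
        + (4 * a * exp z ^ 2 + 2 * b * exp z + 2 * d + 1) * deriv F (exp z + c)
        + exp z * deriv (deriv F) (exp z + c)) := by
  rw [deriv_deriv_kernel hφ hF hF', hℓ, exp_neg]
  simp only [exp_ofNat_mul]
  field_simp
  linear_combination (φ z * C * F (exp z + c)) * (exp z ^ 4 * ha + hd)

end HillKernel

/-- the symmetric kernel K(z,s) = φ(z)φ(s)F(e^z+e^s) is annihilated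
by the difference L_z − L_s of the two Hill operators. -/
theorem stmt12 (K0 K1 K2 K3 K4 a b d : ℂ)
    (φ F : ℂ → ℂ) (Kk : ℂ → ℂ → ℂ) (ℓf : ℂ → ℂ)
    (hφ : ∀ z, φ z = Complex.exp (a * Complex.exp (2*z) + b * Complex.exp z + d * z))
    (hℓ : ∀ z, ℓf z = K4 * Complex.exp (4*z) + K3 * Complex.exp (3*z)
      + K2 * Complex.exp (2*z) + K1 * Complex.exp z + K0)
    (hK : ∀ z s, Kk z s = φ z * φ s * F (Complex.exp z + Complex.exp s))
    (hFd : Differentiable ℂ F) (hFd2 : Differentiable ℂ (deriv F))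
    (ha : 4 * a ^ 2 + K4 = 0) (hd : d ^ 2 + K0 = 0)
    (hFode : ∀ ζ, deriv (deriv F) ζ + (4 * a * ζ + 2 * b) * deriv F ζ
      + ((K3 + 4 * a * b) * ζ + K2 + 4 * a * (1 + d) + b ^ 2) * F ζ = 0) :
    ∀ z s : ℂ,
      Complex.exp (-z) * (deriv (fun z' => deriv (fun z'' => Kk z'' s) z') z
          + ℓf z * Kk z s)
      - Complex.exp (-s) * (deriv (fun s' => deriv (fun s'' => Kk z s'') s') s
          + ℓf s * Kk z s) = 0 := by
  intro z s
  have hKz : (fun w => Kk w s) = fun w => φ w * φ s * F (exp w + exp s) := funext fun w => hK w s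
  have hKs : (fun w => Kk z w) = fun w => φ w * φ z * F (exp w + exp z) := by
    funext w; rw [hK, add_comm (exp z)]; ring
  have hLz := exp_neg_mul_hill_kernel hφ hℓ hFd hFd2 ha hd (φ s) (exp s) z
  have hLs := exp_neg_mul_hill_kernel hφ hℓ hFd hFd2 ha hd (φ z) (exp z) s
  rw [add_comm (exp s) (exp z)] at hLs
  rw [hKz, hKs, hK]
  linear_combination hLz - hLs + φ z * φ s * (exp z - exp s) * hFode (exp z + exp s)
end

section
/- Suppose f : ℝ → ℝ satisfies f'' + (A + B cos 2x) f = 0 with B ≠ 0, and suppose f(x) = P(e^{ix}) exp(c₁ e^{ix} + c₂ e^{−ix} + dx) for a polynomial P and constants c₁, c₂, d. Then substituting this ansatz forces c₁² = c₂² = 0 while the coefficient of the highest frequency term requires c₁² + B/2 = 0 (or c₂² + B/2 = 0), a contradiction; hence the Mathieu equation with B ≠ 0 admits no solution of this exponential-polynomial form. -/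
/-!
Put `z = e^{ix}`. For the ansatz `f = P(z) exp(c₁z + c₂/z + dx)`, the Mathieu equation divided by
the exponential factor and multiplied by `z²` becomes a polynomial identity in `z`, valid on the unit
circle and hence identically. Its two top coefficients force `c₁² = B/2 ≠ 0` and then
`2id = 2 deg P + 1`. The reflection `x ↦ -x` preserves the equation and the shape of the ansatz,
replacing `P` by its reversal (of degree `deg P - ord P`), `(c₁, c₂)` by `(c₂, c₁)` and `d` by
`-d - i deg P`; the same argument then gives `2id = 2 ord P - 1`, so `ord P = deg P + 1`, which is
absurd.
-/

open Complex Polynomial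

section EulerOp

variable {R : Type*} [Semiring R]

noncomputable def eulerOp (p : R[X]) : R[X] := X * derivative p

lemma coeff_eulerOp (p : R[X]) (k : ℕ) : (eulerOp p).coeff k = p.coeff k * k := by
  cases k with
  | zero => simp [eulerOp]
  | succ k => simp [eulerOp, coeff_derivative]

end EulerOp

lemma hasDerivAt_cexp_const_mul (a : ℂ) (x : ℝ) :
    HasDerivAt (fun x : ℝ => exp (a * x)) (a * exp (a * x)) x := by
  simpa [mul_comm] using ((hasDerivAt_id x).ofReal_comp.const_mul a).cexp

lemma hasDerivAt_eval_cexp_I_mul (p : ℂ[X]) (x : ℝ) :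
    HasDerivAt (fun x : ℝ => p.eval (exp (I * x))) (I * (eulerOp p).eval (exp (I * x))) x :=
  ((p.hasDerivAt _).comp x (hasDerivAt_cexp_const_mul I x)).congr_deriv
    (by simp [eulerOp]; ring)

lemma deriv_deriv_mul_cexp {𝕜 : Type*} [NontriviallyNormedField 𝕜] [NormedAlgebra 𝕜 ℂ]
    {g g' g'' h h' h'' : 𝕜 → ℂ}
    (hg : ∀ x, HasDerivAt g (g' x) x) (hg' : ∀ x, HasDerivAt g' (g'' x) x)
    (hh : ∀ x, HasDerivAt h (h' x) x) (hh' : ∀ x, HasDerivAt h' (h'' x) x) (x : 𝕜) :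
    deriv (deriv fun y => g y * exp (h y)) x
      = (g'' x + 2 * h' x * g' x + (h'' x + h' x ^ 2) * g x) * exp (h x) := by
  have hd : deriv (fun y => g y * exp (h y)) = fun y => (g' y + h' y * g y) * exp (h y) := by
    funext y
    exact ((hg y).mul (hh y).cexp).deriv.trans (by ring)
  rw [hd]
  exact (((hg' x).add ((hh' x).mul (hg x))).mul (hh x).cexp).deriv.trans
    (by simp only [Pi.add_apply, Pi.mul_apply]; ring)

lemma injOn_cexp_I_mul : Set.InjOn (fun x : ℝ => exp (I * x)) (Set.Ioc (-Real.pi) Real.pi) := by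
  intro a ha b hb hab
  refine Circle.exp_injOn_Ioc (by linarith) ha hb (Circle.ext ?_)
  simpa [Circle.coe_exp, mul_comm] using hab

lemma Polynomial.eq_zero_of_forall_eval_cexp_I_mul {p : ℂ[X]}
    (h : ∀ x : ℝ, p.eval (exp (I * x)) = 0) : p = 0 :=
  eq_zero_of_infinite_isRoot p <|
    ((Set.Ioc_infinite (neg_lt_self Real.pi_pos)).image injOn_cexp_I_mul).mono
      (by rintro _ ⟨x, -, rfl⟩; exact h x)

lemma cos_two_mul_ofReal (x : ℝ) :
    cos (2 * x) = (exp (I * x) ^ 2 + exp (-(I * x)) ^ 2) / 2 := by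
  rw [cos, ← exp_nat_mul, ← exp_nat_mul]
  ring_nf

def IsMathieuSolution (A B : ℂ) (f : ℝ → ℂ) : Prop :=
  ∀ x : ℝ, deriv (deriv f) x + (A + B * cos (2 * x)) * f x = 0

lemma IsMathieuSolution.comp_neg {A B : ℂ} {f : ℝ → ℂ} (h : IsMathieuSolution A B f) :
    IsMathieuSolution A B (fun x => f (-x)) := by
  intro x
  have hd : deriv (fun x => f (-x)) = fun x => -deriv f (-x) :=
    funext fun y => _root_.deriv_comp_neg f y
  rw [hd, deriv.fun_neg, _root_.deriv_comp_neg, neg_neg]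
  simpa [mul_neg, cos_neg] using h (-x)

noncomputable def mathieuAnsatz (P : ℂ[X]) (c₁ c₂ d : ℂ) (x : ℝ) : ℂ :=
  P.eval (exp (I * x)) * exp (c₁ * exp (I * x) + c₂ * exp (-(I * x)) + d * x)

lemma deriv_deriv_mathieuAnsatz (P : ℂ[X]) (c₁ c₂ d : ℂ) (x : ℝ) :
    deriv (deriv (mathieuAnsatz P c₁ c₂ d)) x
      = (I * (I * (eulerOp (eulerOp P)).eval (exp (I * x)))
          + 2 * (c₁ * (I * exp (I * x)) + c₂ * (-I * exp (-(I * x))) + d)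
            * (I * (eulerOp P).eval (exp (I * x)))
          + (c₁ * (I * (I * exp (I * x))) + c₂ * (-I * (-I * exp (-(I * x))))
            + (c₁ * (I * exp (I * x)) + c₂ * (-I * exp (-(I * x))) + d) ^ 2)
            * P.eval (exp (I * x)))
        * exp (c₁ * exp (I * x) + c₂ * exp (-(I * x)) + d * x) := by
  have hu := hasDerivAt_cexp_const_mul I
  have hv (y : ℝ) : HasDerivAt (fun y : ℝ => exp (-(I * y))) (-I * exp (-(I * y))) y := by
    simpa only [neg_mul] using hasDerivAt_cexp_const_mul (-I) y
  have hd (y : ℝ) : HasDerivAt (fun y : ℝ => d * y) d y := by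
    simpa using (hasDerivAt_id y).ofReal_comp.const_mul d
  exact deriv_deriv_mul_cexp (hasDerivAt_eval_cexp_I_mul P)
    (fun y => (hasDerivAt_eval_cexp_I_mul (eulerOp P) y).const_mul I)
    (fun y => (((hu y).const_mul c₁).add ((hv y).const_mul c₂)).add (hd y))
    (fun y => ((((hu y).const_mul I).const_mul c₁).add
      (((hv y).const_mul (-I)).const_mul c₂)).add_const d) x

/-- `z² e^{-(c₁z + c₂/z + dx)} (f'' + (A + B cos 2x) f)` for `f = mathieuAnsatz P c₁ c₂ d`, as a
polynomial in `z = e^{ix}`; `eulerOp` is `z d/dz = -i d/dx`. -/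
noncomputable def mathieuPoly (A B c₁ c₂ d : ℂ) (P : ℂ[X]) : ℂ[X] :=
  C (B / 2 - c₁ ^ 2) * P * X ^ 4
    + C c₁ * (C (2 * I * d - 1) * P - 2 * eulerOp P) * X ^ 3
    + (C (2 * c₁ * c₂ + d ^ 2 + A) * P + C (2 * I * d) * eulerOp P - eulerOp (eulerOp P)) * X ^ 2
    + C c₂ * (2 * eulerOp P - C (2 * I * d + 1) * P) * X
    + C (B / 2 - c₂ ^ 2) * P

lemma mathieuPoly_eq_zero {A B c₁ c₂ d : ℂ} {P : ℂ[X]}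
    (h : IsMathieuSolution A B (mathieuAnsatz P c₁ c₂ d)) : mathieuPoly A B c₁ c₂ d P = 0 := by
  refine eq_zero_of_forall_eval_cexp_I_mul fun x => ?_
  have key : (mathieuPoly A B c₁ c₂ d P).eval (exp (I * x))
        * exp (c₁ * exp (I * x) + c₂ * exp (-(I * x)) + d * x)
      = exp (I * x) ^ 2 * (deriv (deriv (mathieuAnsatz P c₁ c₂ d)) x
        + (A + B * cos (2 * x)) * mathieuAnsatz P c₁ c₂ d x) := by
    rw [deriv_deriv_mathieuAnsatz, cos_two_mul_ofReal, mathieuAnsatz, exp_neg]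
    have hu : exp (I * x) ≠ 0 := exp_ne_zero _
    simp only [mathieuPoly, eval_add, eval_sub, eval_mul, eval_C, eval_X, eval_pow, eval_ofNat]
    field_simp
    ring_nf
    simp only [I_sq]
    ring
  rw [h x, mul_zero] at key
  exact (mul_eq_zero.mp key).resolve_right (exp_ne_zero _)

lemma coeff_mathieuPoly_add_four (A B c₁ c₂ d : ℂ) (P : ℂ[X]) (k : ℕ) :
    (mathieuPoly A B c₁ c₂ d P).coeff (k + 4)
      = (B / 2 - c₁ ^ 2) * P.coeff k + c₁ * (2 * I * d - 1 - 2 * (k + 1)) * P.coeff (k + 1)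
        + (2 * c₁ * c₂ + d ^ 2 + A + 2 * I * d * (k + 2) - (k + 2) ^ 2) * P.coeff (k + 2)
        + c₂ * (2 * (k + 3) - 2 * I * d - 1) * P.coeff (k + 3)
        + (B / 2 - c₂ ^ 2) * P.coeff (k + 4) := by
  simp only [mathieuPoly, coeff_add, coeff_sub, coeff_mul_X_pow', coeff_mul_X, coeff_C_mul,
    coeff_ofNat_mul, coeff_eulerOp]
  norm_num
  push_cast
  ring

lemma coeff_mathieuPoly_add_three {A B c₁ c₂ d : ℂ} (P : ℂ[X]) (hc₁ : c₁ ^ 2 = B / 2) (k : ℕ) :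
    (mathieuPoly A B c₁ c₂ d P).coeff (k + 3)
      = c₁ * (2 * I * d - 1 - 2 * k) * P.coeff k
        + (2 * c₁ * c₂ + d ^ 2 + A + 2 * I * d * (k + 1) - (k + 1) ^ 2) * P.coeff (k + 1)
        + c₂ * (2 * (k + 2) - 2 * I * d - 1) * P.coeff (k + 2)
        + (B / 2 - c₂ ^ 2) * P.coeff (k + 3) := by
  simp only [mathieuPoly, hc₁, sub_self, C_0, zero_mul, zero_add, coeff_add, coeff_sub,
    coeff_mul_X_pow', coeff_mul_X, coeff_C_mul, coeff_ofNat_mul, coeff_eulerOp]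
  norm_num
  push_cast
  ring

theorem two_mul_I_mul_eq_of_isMathieuSolution {A B c₁ c₂ d : ℂ} {P : ℂ[X]} (hB : B ≠ 0)
    (hP : P ≠ 0) (h : IsMathieuSolution A B (mathieuAnsatz P c₁ c₂ d)) :
    2 * I * d = 2 * P.natDegree + 1 := by
  have hQ := mathieuPoly_eq_zero h
  have hlc : P.coeff P.natDegree ≠ 0 := leadingCoeff_ne_zero.mpr hP
  have hvanish (j : ℕ) : P.coeff (P.natDegree + (j + 1)) = 0 :=
    coeff_eq_zero_of_natDegree_lt (by omega)
  have htop := coeff_mathieuPoly_add_four A B c₁ c₂ d P P.natDegree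
  simp only [hQ, coeff_zero, add_assoc, hvanish, mul_zero, add_zero] at htop
  have hc₁ : c₁ ^ 2 = B / 2 := by
    linear_combination -((mul_eq_zero.mp htop.symm).resolve_right hlc)
  have hc₁0 : c₁ ≠ 0 := by
    rintro rfl
    exact hB (by linear_combination -2 * hc₁)
  have hnext := coeff_mathieuPoly_add_three (c₂ := c₂) (d := d) (A := A) P hc₁ P.natDegree
  simp only [hQ, coeff_zero, add_assoc, hvanish, mul_zero, add_zero] at hnext
  have hd := (mul_eq_zero.mp hnext.symm).resolve_right hlc
  linear_combination (mul_eq_zero.mp hd).resolve_left hc₁0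

lemma mathieuAnsatz_comp_neg (P : ℂ[X]) (c₁ c₂ d : ℂ) :
    (fun x => mathieuAnsatz P c₁ c₂ d (-x))
      = mathieuAnsatz P.reverse c₂ c₁ (-d - I * P.natDegree) := by
  funext x
  let : Invertible (exp (-(I * x))) :=
    ⟨exp (I * x), by rw [← exp_add]; simp, by rw [← exp_add]; simp⟩
  have hrev := eval₂_reverse_mul_pow (RingHom.id ℂ) (exp (-(I * x))) P
  simp only [eval₂_id] at hrev
  simp only [mathieuAnsatz, ofReal_neg, mul_neg, neg_neg]
  rw [← hrev, show ⅟(exp (-(I * x))) = exp (I * x) from rfl, mul_assoc, ← exp_nat_mul,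
    ← exp_add]
  congr 2
  ring

/-- the Mathieu equation f'' + (A + B cos 2x) f = 0 with B ≠ 0
admits no solution of the exponential-polynomial (Bank–Laine/Kovacic Case 1)
form f(x) = P(e^{ix}) exp(c₁e^{ix} + c₂e^{−ix} + dx). -/
theorem stmt16 (A B : ℂ) (hB : B ≠ 0) (P : Polynomial ℂ) (hP : P ≠ 0)
    (c1 c2 d : ℂ) (f : ℝ → ℂ)
    (hf : ∀ x : ℝ, f x = P.eval (Complex.exp (Complex.I * x))
      * Complex.exp (c1 * Complex.exp (Complex.I * x)
        + c2 * Complex.exp (-(Complex.I * x)) + d * x))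
    (hode : ∀ x : ℝ, deriv (deriv f) x
      + (A + B * Complex.cos (2 * x)) * f x = 0) :
    False := by
  have hf' : f = mathieuAnsatz P c1 c2 d := funext hf
  have hsol : IsMathieuSolution A B (mathieuAnsatz P c1 c2 d) := hf' ▸ hode
  have htop := two_mul_I_mul_eq_of_isMathieuSolution hB hP hsol
  have hbot := two_mul_I_mul_eq_of_isMathieuSolution hB (mt reverse_eq_zero.mp hP)
    (mathieuAnsatz_comp_neg P c1 c2 d ▸ hsol.comp_neg)
  have hle := natTrailingDegree_le_natDegree P
  rw [reverse_natDegree, Nat.cast_sub hle] at hbot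
  have hord : (P.natTrailingDegree : ℂ) = P.natDegree + 1 := by
    linear_combination (htop + hbot) / 2 + P.natDegree * I_sq
  have : P.natTrailingDegree = P.natDegree + 1 := by exact_mod_cast hord
  omega
end

section
/- Let F, G : ℝ × ℝ → ℂ be C² functions such that F, ∂F/∂z, ∂F/∂s, G, ∂G/∂z, ∂G/∂s all tend to 0 as |z| → ∞ (uniformly in s on compacts) and as |s| → ∞ (uniformly in z on compacts), with all relevant integrals absolutely convergent. Suppose F_{zz} − F_{ss} = V(z,s) F + a W(z,s) F and G_{zz} − G_{ss} = V(z,s) G + b W(z,s) G for continuous functions V, W and constants a ≠ b. Then ∫∫_{ℝ²} F(z,s) G(z,s) W(z,s) dz ds = 0. -/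
open Filter MeasureTheory

/-! Green's identity on each line: `u'' v - u v''` is the derivative of `u' v - u v'`, which
vanishes at `±∞`, so by Fubini `∬ (F_zz G - F G_zz) = ∬ (F_ss G - F G_ss) = 0`. Multiplying the
equations by `G` and `F` and subtracting, the `V`-terms cancel and `(a - b) F G W` is left. -/

/-- A two-variable function decays to 0 as |z| → ∞ uniformly in s on compacts,
and as |s| → ∞ uniformly in z on compacts. -/
def DecaysUnifOnCompacts (H : ℝ × ℝ → ℂ) : Prop :=
  (∀ K : Set ℝ, IsCompact K →
      TendstoUniformlyOn (fun z s => H (z, s)) 0 atTop K ∧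
      TendstoUniformlyOn (fun z s => H (z, s)) 0 atBot K) ∧
  (∀ K : Set ℝ, IsCompact K →
      TendstoUniformlyOn (fun s z => H (z, s)) 0 atTop K ∧
      TendstoUniformlyOn (fun s z => H (z, s)) 0 atBot K)

namespace DecaysUnifOnCompacts

variable {H : ℝ × ℝ → ℂ}

theorem tendsto_cocompact_fst (h : DecaysUnifOnCompacts H) (s : ℝ) :
    Tendsto (fun z => H (z, s)) (cocompact ℝ) (nhds 0) := by
  obtain ⟨htop, hbot⟩ := h.1 {s} isCompact_singleton
  rw [cocompact_eq_atBot_atTop, tendsto_sup]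
  exact ⟨hbot.tendsto_at rfl, htop.tendsto_at rfl⟩

theorem tendsto_cocompact_snd (h : DecaysUnifOnCompacts H) (z : ℝ) :
    Tendsto (fun s => H (z, s)) (cocompact ℝ) (nhds 0) := by
  obtain ⟨htop, hbot⟩ := h.2 {z} isCompact_singleton
  rw [cocompact_eq_atBot_atTop, tendsto_sup]
  exact ⟨hbot.tendsto_at rfl, htop.tendsto_at rfl⟩

end DecaysUnifOnCompacts

section Green

variable {𝕜 : Type*} [RCLike 𝕜] {u v : ℝ → 𝕜}

theorem differentiable_deriv_of_contDiff_two (hu : ContDiff ℝ 2 u) : Differentiable ℝ (deriv u) :=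
  (hu.deriv' (n := 1)).differentiable one_ne_zero

theorem hasDerivAt_deriv_mul_sub_mul_deriv (hu : Differentiable ℝ u)
    (hu' : Differentiable ℝ (deriv u)) (hv : Differentiable ℝ v)
    (hv' : Differentiable ℝ (deriv v)) (x : ℝ) :
    HasDerivAt (fun y => deriv u y * v y - u y * deriv v y)
      (deriv (deriv u) x * v x - u x * deriv (deriv v) x) x :=
  (((hu' x).hasDerivAt.mul (hv x).hasDerivAt).sub
    ((hu x).hasDerivAt.mul (hv' x).hasDerivAt)).congr_deriv (by ring)

theorem integral_deriv_deriv_mul_sub_mul_deriv_deriv_eq_zero (hu : Differentiable ℝ u)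
    (hu' : Differentiable ℝ (deriv u)) (hv : Differentiable ℝ v)
    (hv' : Differentiable ℝ (deriv v))
    (hu0 : Tendsto u (cocompact ℝ) (nhds 0)) (hu'0 : Tendsto (deriv u) (cocompact ℝ) (nhds 0))
    (hv0 : Tendsto v (cocompact ℝ) (nhds 0)) (hv'0 : Tendsto (deriv v) (cocompact ℝ) (nhds 0)) :
    ∫ x, (deriv (deriv u) x * v x - u x * deriv (deriv v) x) = 0 := by
  -- without integrability the Bochner integral is `0` by convention
  by_cases hI : Integrable fun x => deriv (deriv u) x * v x - u x * deriv (deriv v) x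
  swap
  · exact integral_undef hI
  have hlim : Tendsto (fun y => deriv u y * v y - u y * deriv v y) (cocompact ℝ) (nhds 0) := by
    simpa using (hu'0.mul hv0).sub (hu0.mul hv'0)
  rw [cocompact_eq_atBot_atTop, tendsto_sup] at hlim
  simpa using integral_of_hasDerivAt_of_tendsto
    (hasDerivAt_deriv_mul_sub_mul_deriv hu hu' hv hv') hI hlim.1 hlim.2

end Green

section Fubini

variable {α β E : Type*} [MeasurableSpace α] [MeasurableSpace β] {μ : Measure α} {ν : Measure β}
  [SFinite μ] [SFinite ν] [NormedAddCommGroup E] [NormedSpace ℝ E] {f : α × β → E}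

theorem integral_prod_eq_zero_of_forall_integral_fst_eq_zero (hf : Integrable f (μ.prod ν))
    (h : ∀ y, ∫ x, f (x, y) ∂μ = 0) : ∫ p, f p ∂μ.prod ν = 0 := by
  rw [integral_prod_symm f hf]
  exact integral_eq_zero_of_ae (Eventually.of_forall h)

theorem integral_prod_eq_zero_of_forall_integral_snd_eq_zero (hf : Integrable f (μ.prod ν))
    (h : ∀ x, ∫ y, f (x, y) ∂ν = 0) : ∫ p, f p ∂μ.prod ν = 0 := by
  rw [integral_prod f hf]
  exact integral_eq_zero_of_ae (Eventually.of_forall h)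

end Fubini

theorem stmt19_general (F G V W : ℝ × ℝ → ℂ) (a b : ℂ) (hab : a ≠ b)
    (hF : ContDiff ℝ 2 F) (hG : ContDiff ℝ 2 G)
    (hFpde : ∀ z s : ℝ,
      deriv (fun t => deriv (fun t' => F (t', s)) t) z
        - deriv (fun t => deriv (fun t' => F (z, t')) t) s
      = V (z, s) * F (z, s) + a * W (z, s) * F (z, s))
    (hGpde : ∀ z s : ℝ,
      deriv (fun t => deriv (fun t' => G (t', s)) t) z
        - deriv (fun t => deriv (fun t' => G (z, t')) t) s
      = V (z, s) * G (z, s) + b * W (z, s) * G (z, s))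
    (hFdec : DecaysUnifOnCompacts F)
    (hFzdec : DecaysUnifOnCompacts (fun p => deriv (fun t => F (t, p.2)) p.1))
    (hFsdec : DecaysUnifOnCompacts (fun p => deriv (fun t => F (p.1, t)) p.2))
    (hGdec : DecaysUnifOnCompacts G)
    (hGzdec : DecaysUnifOnCompacts (fun p => deriv (fun t => G (t, p.2)) p.1))
    (hGsdec : DecaysUnifOnCompacts (fun p => deriv (fun t => G (p.1, t)) p.2))
    (hint2 : Integrable (fun p : ℝ × ℝ =>
      deriv (fun t => deriv (fun t' => F (t', p.2)) t) p.1 * G p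
        - F p * deriv (fun t => deriv (fun t' => G (t', p.2)) t) p.1))
    (hint3 : Integrable (fun p : ℝ × ℝ =>
      deriv (fun t => deriv (fun t' => F (p.1, t')) t) p.2 * G p
        - F p * deriv (fun t => deriv (fun t' => G (p.1, t')) t) p.2)) :
    ∫ p : ℝ × ℝ, F p * G p * W p = 0 := by
  have line_fst {H : ℝ × ℝ → ℂ} (hH : ContDiff ℝ 2 H) (s : ℝ) : ContDiff ℝ 2 fun z => H (z, s) :=
    hH.comp (contDiff_id.prodMk contDiff_const)
  have line_snd {H : ℝ × ℝ → ℂ} (hH : ContDiff ℝ 2 H) (z : ℝ) : ContDiff ℝ 2 fun s => H (z, s) :=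
    hH.comp (contDiff_const.prodMk contDiff_id)
  have green_z := integral_prod_eq_zero_of_forall_integral_fst_eq_zero hint2 fun s =>
    integral_deriv_deriv_mul_sub_mul_deriv_deriv_eq_zero
      ((line_fst hF s).differentiable two_ne_zero)
      (differentiable_deriv_of_contDiff_two (line_fst hF s))
      ((line_fst hG s).differentiable two_ne_zero)
      (differentiable_deriv_of_contDiff_two (line_fst hG s))
      (hFdec.tendsto_cocompact_fst s) (hFzdec.tendsto_cocompact_fst s)
      (hGdec.tendsto_cocompact_fst s) (hGzdec.tendsto_cocompact_fst s)
  have green_s := integral_prod_eq_zero_of_forall_integral_snd_eq_zero hint3 fun z =>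
    integral_deriv_deriv_mul_sub_mul_deriv_deriv_eq_zero
      ((line_snd hF z).differentiable two_ne_zero)
      (differentiable_deriv_of_contDiff_two (line_snd hF z))
      ((line_snd hG z).differentiable two_ne_zero)
      (differentiable_deriv_of_contDiff_two (line_snd hG z))
      (hFdec.tendsto_cocompact_snd z) (hFsdec.tendsto_cocompact_snd z)
      (hGdec.tendsto_cocompact_snd z) (hGsdec.tendsto_cocompact_snd z)
  have cross : ∀ p : ℝ × ℝ,
      (deriv (fun t => deriv (fun t' => F (t', p.2)) t) p.1 * G p
          - F p * deriv (fun t => deriv (fun t' => G (t', p.2)) t) p.1)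
        - (deriv (fun t => deriv (fun t' => F (p.1, t')) t) p.2 * G p
          - F p * deriv (fun t => deriv (fun t' => G (p.1, t')) t) p.2)
      = (a - b) * (F p * G p * W p) := fun ⟨z, s⟩ => by
    linear_combination G (z, s) * hFpde z s - F (z, s) * hGpde z s
  have h := integral_sub hint2 hint3
  rw [Measure.volume_eq_prod, green_z, green_s, sub_zero,
    integral_congr_ae (Eventually.of_forall cross), integral_const_mul] at h
  exact (mul_eq_zero.mp h).resolve_left (sub_ne_zero.mpr hab)

/-- abstract Green's-identity double orthogonality: if
F_zz − F_ss = (V + aW)F and G_zz − G_ss = (V + bW)G with a ≠ b, and F, G and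
their first partials decay at infinity with all relevant integrals absolutely
convergent, then ∬ F G W = 0. -/
theorem stmt19 (F G V W : ℝ × ℝ → ℂ) (a b : ℂ) (hab : a ≠ b)
    (hF : ContDiff ℝ 2 F) (hG : ContDiff ℝ 2 G)
    (hV : Continuous V) (hW : Continuous W)
    (hFpde : ∀ z s : ℝ,
      deriv (fun t => deriv (fun t' => F (t', s)) t) z
        - deriv (fun t => deriv (fun t' => F (z, t')) t) s
      = V (z, s) * F (z, s) + a * W (z, s) * F (z, s))
    (hGpde : ∀ z s : ℝ,
      deriv (fun t => deriv (fun t' => G (t', s)) t) z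
        - deriv (fun t => deriv (fun t' => G (z, t')) t) s
      = V (z, s) * G (z, s) + b * W (z, s) * G (z, s))
    (hFdec : DecaysUnifOnCompacts F)
    (hFzdec : DecaysUnifOnCompacts (fun p => deriv (fun t => F (t, p.2)) p.1))
    (hFsdec : DecaysUnifOnCompacts (fun p => deriv (fun t => F (p.1, t)) p.2))
    (hGdec : DecaysUnifOnCompacts G)
    (hGzdec : DecaysUnifOnCompacts (fun p => deriv (fun t => G (t, p.2)) p.1))
    (hGsdec : DecaysUnifOnCompacts (fun p => deriv (fun t => G (p.1, t)) p.2))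
    (hint : Integrable (fun p : ℝ × ℝ => F p * G p * W p))
    (hint2 : Integrable (fun p : ℝ × ℝ =>
      deriv (fun t => deriv (fun t' => F (t', p.2)) t) p.1 * G p
        - F p * deriv (fun t => deriv (fun t' => G (t', p.2)) t) p.1))
    (hint3 : Integrable (fun p : ℝ × ℝ =>
      deriv (fun t => deriv (fun t' => F (p.1, t')) t) p.2 * G p
        - F p * deriv (fun t => deriv (fun t' => G (p.1, t')) t) p.2)) :
    ∫ p : ℝ × ℝ, F p * G p * W p = 0 :=
  stmt19_general F G V W a b hab hF hG hFpde hGpde hFdec hFzdec hFsdec hGdec hGzdec hGsdec hint2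
    hint3
end
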